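/- Let T = H^{-1/2} S H^{1/2} with H symmetric positive definite and S symmetric. Define the offline Anderson extrapolate x_e^{(k)} = ∑_{i=1}^k c*_i x^{(i-1)} where c* minimizes ‖∑_{i=1}^k c_i (x^{(i)} - x^{(i-1)})‖ over c ∈ ℝ^k with ∑ c_i = 1. Then ‖(T - Id)(x_e^{(k)} - x*)‖ ≤ √κ(H) · min_{P ∈ 𝒫_{k-1}, P(1)=1} ‖P(S)‖ · ‖(T - Id)(x^{(0)} - x*)‖, where 𝒫_{k-1} is the set of polynomials of degree at most k-1. -/

import Mathlib

noncomputable def eNorm {p : ℕ} (v : Fin p → ℝ) : ℝ := Real.sqrt (∑ i, v i ^ 2)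

noncomputable def opNorm {p : ℕ} (M : Matrix (Fin p) (Fin p) ℝ) : ℝ :=
  ‖Matrix.toEuclideanCLM (𝕜 := ℝ) M‖

/-- `Matrix.PosSemidef.sqrt` was removed from Mathlib; restated with its old (Dec 2024) definition. -/
noncomputable def Matrix.PosSemidef.sqrt {n : Type*} [Fintype n] [DecidableEq n] {𝕜 : Type*} [RCLike 𝕜]
    [PartialOrder 𝕜] [StarOrderedRing 𝕜]
    {A : Matrix n n 𝕜} (hA : A.PosSemidef) : Matrix n n 𝕜 :=
  (hA.1.eigenvectorUnitary : Matrix n n 𝕜) * Matrix.diagonal ((↑) ∘ (Real.sqrt ·) ∘ hA.1.eigenvalues) *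
    (star hA.1.eigenvectorUnitary : Matrix n n 𝕜)

noncomputable def condNum {p : ℕ} {H : Matrix (Fin p) (Fin p) ℝ} (hH : H.IsHermitian) : ℝ :=
  (⨆ i, hH.eigenvalues i) / (⨅ i, hH.eigenvalues i)

/-!
The residual of an affine combination of iterates telescopes:
`(T - 1)(∑ cᵢ xᵢ - x*) = ∑ cᵢ (xᵢ₊₁ - xᵢ) = ∑ cᵢ Tⁱ (T - 1)(x₀ - x*)`. The coefficients of any `P`
with `deg P < k` and `P(1) = 1` are admissible, so by minimality the Anderson residual is at most
`‖P(T)(T - 1)(x₀ - x*)‖`. Since `T` is conjugate to `S` by `H^{1/2}`, `P(T) = H^{-1/2} P(S) H^{1/2}`,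
and diagonalising `H` gives `‖H^{1/2}‖ ≤ √λ_max` and `‖H^{-1/2}‖ ≤ 1 / √λ_min`.
-/

open Matrix Polynomial
-- `‖M‖` on square matrices is the L2 operator norm, definitionally `opNorm M`.
open scoped Matrix.Norms.L2Operator

theorem eNorm_eq_norm {p : ℕ} (v : Fin p → ℝ) : eNorm v = ‖WithLp.toLp 2 v‖ := by
  simp [eNorm, EuclideanSpace.norm_eq]

theorem eNorm_nonneg {p : ℕ} (v : Fin p → ℝ) : 0 ≤ eNorm v := Real.sqrt_nonneg _

theorem eNorm_mulVec_le {p : ℕ} (M : Matrix (Fin p) (Fin p) ℝ) (v : Fin p → ℝ) :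
    eNorm (M *ᵥ v) ≤ ‖M‖ * eNorm v := by
  simpa only [eNorm_eq_norm, cstar_norm_def, toEuclideanCLM_toLp] using
    (toEuclideanCLM (𝕜 := ℝ) M).le_opNorm (WithLp.toLp 2 v)

theorem Polynomial.aeval_units_inv_mul_mul {R A : Type*} [CommSemiring R] [Semiring A] [Algebra R A]
    (u : Aˣ) (a : A) (P : R[X]) : aeval (↑u⁻¹ * a * ↑u) P = ↑u⁻¹ * aeval a P * ↑u := by
  simpa [ConjAct.units_smul_def] using
    aeval_algHom_apply (MulSemiringAction.toAlgEquiv R A (ConjAct.toConjAct u⁻¹)) a P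

theorem Polynomial.sum_fin_coeff_eq_eval_one {R : Type*} [CommSemiring R] {P : R[X]} {k : ℕ}
    (hP : P.natDegree < k) : ∑ i : Fin k, P.coeff i = P.eval 1 := by
  simp [eval_eq_sum_range' hP, Fin.sum_univ_eq_sum_range (fun i => P.coeff i)]

section PosDefSqrt

open scoped ComplexOrder

variable {n 𝕜 : Type*} [Fintype n] [DecidableEq n] [RCLike 𝕜]

theorem Matrix.l2_opNorm_conjStarAlgAut (U : unitary (Matrix n n 𝕜)) (A : Matrix n n 𝕜) :
    ‖Unitary.conjStarAlgAut 𝕜 _ U A‖ = ‖A‖ := by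
  rw [Unitary.conjStarAlgAut_apply, ← Unitary.coe_star, CStarRing.norm_mul_coe_unitary,
    CStarRing.norm_coe_unitary_mul]

variable {A : Matrix n n 𝕜}

theorem Matrix.PosSemidef.sqrt_eq_conjStarAlgAut (hA : A.PosSemidef) :
    hA.sqrt = Unitary.conjStarAlgAut 𝕜 _ hA.1.eigenvectorUnitary
      (diagonal fun i => (√(hA.1.eigenvalues i) : 𝕜)) :=
  rfl

theorem Matrix.PosDef.sqrt_mul_conjStarAlgAut_inv_sqrt (hA : A.PosDef) :
    hA.posSemidef.sqrt * Unitary.conjStarAlgAut 𝕜 _ hA.1.eigenvectorUnitary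
      (diagonal fun i => ((√(hA.1.eigenvalues i))⁻¹ : 𝕜)) = 1 := by
  rw [hA.posSemidef.sqrt_eq_conjStarAlgAut, ← map_mul, diagonal_mul_diagonal,
    ← map_one (Unitary.conjStarAlgAut 𝕜 _ hA.1.eigenvectorUnitary), ← diagonal_one]
  congr
  funext i
  exact mul_inv_cancel₀ (RCLike.ofReal_ne_zero.mpr (Real.sqrt_pos.mpr (hA.eigenvalues_pos i)).ne')

theorem Matrix.PosDef.sqrt_inv_eq_conjStarAlgAut (hA : A.PosDef) :
    hA.posSemidef.sqrt⁻¹ = Unitary.conjStarAlgAut 𝕜 _ hA.1.eigenvectorUnitary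
      (diagonal fun i => ((√(hA.1.eigenvalues i))⁻¹ : 𝕜)) :=
  inv_eq_right_inv hA.sqrt_mul_conjStarAlgAut_inv_sqrt

theorem Matrix.PosDef.isUnit_sqrt (hA : A.PosDef) : IsUnit hA.posSemidef.sqrt :=
  (isUnit_iff_isUnit_det _).mpr (isUnit_det_of_right_inverse hA.sqrt_mul_conjStarAlgAut_inv_sqrt)

theorem Matrix.PosDef.aeval_sqrt_inv_mul_mul_sqrt (hA : A.PosDef) (S : Matrix n n 𝕜)
    (P : 𝕜[X]) :
    aeval (hA.posSemidef.sqrt⁻¹ * S * hA.posSemidef.sqrt) P =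
      hA.posSemidef.sqrt⁻¹ * aeval S P * hA.posSemidef.sqrt := by
  obtain ⟨u, hu⟩ := hA.isUnit_sqrt
  rw [← hu, ← coe_units_inv]
  exact aeval_units_inv_mul_mul u S P

theorem Matrix.PosSemidef.l2_opNorm_sqrt_le (hA : A.PosSemidef) :
    ‖hA.sqrt‖ ≤ √(⨆ i, hA.1.eigenvalues i) := by
  rw [hA.sqrt_eq_conjStarAlgAut, l2_opNorm_conjStarAlgAut, l2_opNorm_diagonal,
    pi_norm_le_iff_of_nonneg (Real.sqrt_nonneg _)]
  intro i
  rw [RCLike.norm_ofReal, abs_of_nonneg (Real.sqrt_nonneg _)]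
  exact Real.sqrt_le_sqrt (le_ciSup (Set.finite_range _).bddAbove i)

theorem Matrix.PosDef.l2_opNorm_sqrt_inv_le (hA : A.PosDef) :
    ‖hA.posSemidef.sqrt⁻¹‖ ≤ (√(⨅ i, hA.1.eigenvalues i))⁻¹ := by
  rw [hA.sqrt_inv_eq_conjStarAlgAut, l2_opNorm_conjStarAlgAut, l2_opNorm_diagonal,
    pi_norm_le_iff_of_nonneg (by positivity)]
  intro i
  have hmin : 0 < ⨅ i, hA.1.eigenvalues i := by
    have : Nonempty n := ⟨i⟩
    obtain ⟨j, hj⟩ := exists_eq_ciInf_of_finite (f := hA.1.eigenvalues)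
    exact hj ▸ hA.eigenvalues_pos j
  rw [norm_inv, RCLike.norm_ofReal, abs_of_nonneg (Real.sqrt_nonneg _)]
  gcongr
  exact ciInf_le (Set.finite_range _).bddBelow i

end PosDefSqrt

section FixedPointIteration

variable {n R : Type*} [Fintype n] [CommRing R] {T : Matrix n n R}
  {b xstar : n → R} {x : ℕ → n → R}

theorem iterate_succ_sub_fixedPoint (hfix : T *ᵥ xstar + b = xstar)
    (hx : ∀ m, x (m + 1) = T *ᵥ x m + b) (m : ℕ) :
    x (m + 1) - xstar = T *ᵥ (x m - xstar) := by
  rw [hx, mulVec_sub]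
  linear_combination hfix

theorem iterate_sub_fixedPoint [DecidableEq n] (hfix : T *ᵥ xstar + b = xstar)
    (hx : ∀ m, x (m + 1) = T *ᵥ x m + b) (m : ℕ) : x m - xstar = T ^ m *ᵥ (x 0 - xstar) := by
  induction m with
  | zero => simp
  | succ m ih => rw [iterate_succ_sub_fixedPoint hfix hx, ih, mulVec_mulVec, pow_succ']

theorem sub_one_mulVec_iterate_sub_fixedPoint [DecidableEq n] (hfix : T *ᵥ xstar + b = xstar)
    (hx : ∀ m, x (m + 1) = T *ᵥ x m + b) (m : ℕ) :
    (T - 1) *ᵥ (x m - xstar) = x (m + 1) - x m := by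
  rw [sub_mulVec, one_mulVec, ← iterate_succ_sub_fixedPoint hfix hx]
  abel

theorem iterate_succ_sub [DecidableEq n] (hfix : T *ᵥ xstar + b = xstar)
    (hx : ∀ m, x (m + 1) = T *ᵥ x m + b) (m : ℕ) :
    x (m + 1) - x m = T ^ m *ᵥ ((T - 1) *ᵥ (x 0 - xstar)) := by
  have hcomm : Commute (T - 1) (T ^ m) :=
    ((Commute.refl T).sub_left (Commute.one_left T)).pow_right m
  rw [← sub_one_mulVec_iterate_sub_fixedPoint hfix hx, iterate_sub_fixedPoint hfix hx,
    mulVec_mulVec, mulVec_mulVec, hcomm.eq]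

theorem sub_one_mulVec_affineCombination_sub [DecidableEq n] (hfix : T *ᵥ xstar + b = xstar)
    (hx : ∀ m, x (m + 1) = T *ᵥ x m + b) {k : ℕ} {c : Fin k → R} (hc : ∑ i, c i = 1) :
    (T - 1) *ᵥ (∑ i, c i • x i - xstar) = ∑ i : Fin k, c i • (x ((i : ℕ) + 1) - x i) := by
  have : ∑ i, c i • x i - xstar = ∑ i, c i • (x i - xstar) := by
    simp only [smul_sub, Finset.sum_sub_distrib, ← Finset.sum_smul, hc, one_smul]
  simp only [this, mulVec_sum, mulVec_smul, sub_one_mulVec_iterate_sub_fixedPoint hfix hx]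

theorem sum_coeff_smul_iterate_succ_sub [DecidableEq n] (hfix : T *ᵥ xstar + b = xstar)
    (hx : ∀ m, x (m + 1) = T *ᵥ x m + b) {k : ℕ} {P : R[X]} (hP : P.natDegree < k) :
    ∑ i : Fin k, P.coeff i • (x ((i : ℕ) + 1) - x i) =
      aeval T P *ᵥ ((T - 1) *ᵥ (x 0 - xstar)) := by
  simp only [aeval_eq_sum_range' hP, ← Fin.sum_univ_eq_sum_range (fun i => P.coeff i • T ^ i),
    sum_mulVec, smul_mulVec, iterate_succ_sub hfix hx]

end FixedPointIteration

theorem Matrix.PosDef.l2_opNorm_sqrt_inv_mul_mul_sqrt_le {p : ℕ} {H : Matrix (Fin p) (Fin p) ℝ}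
    (hH : H.PosDef) (A : Matrix (Fin p) (Fin p) ℝ) :
    ‖hH.posSemidef.sqrt⁻¹ * A * hH.posSemidef.sqrt‖ ≤ √(condNum hH.isHermitian) * ‖A‖ := by
  have hmin : 0 ≤ ⨅ i, hH.isHermitian.eigenvalues i :=
    Real.iInf_nonneg fun i => (hH.eigenvalues_pos i).le
  calc ‖hH.posSemidef.sqrt⁻¹ * A * hH.posSemidef.sqrt‖
      ≤ ‖hH.posSemidef.sqrt⁻¹‖ * ‖A‖ * ‖hH.posSemidef.sqrt‖ := norm_mul₃_le
    _ ≤ (√(⨅ i, hH.isHermitian.eigenvalues i))⁻¹ * ‖A‖ *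
          √(⨆ i, hH.isHermitian.eigenvalues i) := by
      gcongr
      · exact hH.l2_opNorm_sqrt_inv_le
      · exact hH.posSemidef.l2_opNorm_sqrt_le
    _ = √(condNum hH.isHermitian) * ‖A‖ := by
      rw [condNum, Real.sqrt_div' _ hmin]
      ring

theorem stmt_6_general {p k : ℕ} (hk : 1 ≤ k) (H S : Matrix (Fin p) (Fin p) ℝ)
    (hH : H.PosDef)
    (T : Matrix (Fin p) (Fin p) ℝ)
    (hT : T = (hH.posSemidef.sqrt)⁻¹ * S * hH.posSemidef.sqrt)
    (b xstar : Fin p → ℝ) (hfix : T.mulVec xstar + b = xstar)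
    (x : ℕ → Fin p → ℝ) (hx : ∀ m, x (m + 1) = T.mulVec (x m) + b)
    (cstar : Fin k → ℝ) (hcsum : ∑ i, cstar i = 1)
    (hmin : ∀ c : Fin k → ℝ, ∑ i, c i = 1 →
      eNorm (∑ i : Fin k, cstar i • (x ((i : ℕ) + 1) - x i)) ≤
        eNorm (∑ i : Fin k, c i • (x ((i : ℕ) + 1) - x i))) :
    ∀ P : Polynomial ℝ, P.natDegree ≤ k - 1 → P.eval 1 = 1 →
      eNorm ((T - 1).mulVec ((∑ i : Fin k, cstar i • x i) - xstar)) ≤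
        Real.sqrt (condNum hH.isHermitian) * opNorm (Polynomial.aeval S P) *
          eNorm ((T - 1).mulVec (x 0 - xstar)) := by
  intro P hdeg hP1
  have hPk : P.natDegree < k := by omega
  have hcoeff : ∑ i : Fin k, P.coeff i = 1 := (sum_fin_coeff_eq_eval_one hPk).trans hP1
  calc eNorm ((T - 1) *ᵥ (∑ i, cstar i • x i - xstar))
      = eNorm (∑ i : Fin k, cstar i • (x ((i : ℕ) + 1) - x i)) := by
        rw [sub_one_mulVec_affineCombination_sub hfix hx hcsum]
    _ ≤ eNorm (∑ i : Fin k, P.coeff i • (x ((i : ℕ) + 1) - x i)) := hmin _ hcoeff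
    _ = eNorm (aeval T P *ᵥ ((T - 1) *ᵥ (x 0 - xstar))) := by
        rw [sum_coeff_smul_iterate_succ_sub hfix hx hPk]
    _ ≤ ‖aeval T P‖ * eNorm ((T - 1) *ᵥ (x 0 - xstar)) := eNorm_mulVec_le _ _
    _ ≤ √(condNum hH.isHermitian) * opNorm (aeval S P) *
          eNorm ((T - 1) *ᵥ (x 0 - xstar)) := by
        rw [hT, hH.aeval_sqrt_inv_mul_mul_sqrt]
        gcongr
        · exact eNorm_nonneg _
        · exact hH.l2_opNorm_sqrt_inv_mul_mul_sqrt_le _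

/-- Bound for the offline Anderson extrapolate: for `T = H^{-1/2} S H^{1/2}` and `c*` the
Anderson coefficients (minimizing the norm of the combined residual among coefficients summing
to one), the extrapolation error is bounded using any polynomial `P` of degree at most `k - 1`
with `P(1) = 1`; taking the minimum over such `P` gives the stated bound. -/
theorem stmt_6 {p k : ℕ} (hk : 1 ≤ k) (H S : Matrix (Fin p) (Fin p) ℝ)
    (hH : H.PosDef) (hS : S.IsHermitian)
    (T : Matrix (Fin p) (Fin p) ℝ)
    (hT : T = (hH.posSemidef.sqrt)⁻¹ * S * hH.posSemidef.sqrt)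
    (b xstar : Fin p → ℝ) (hfix : T.mulVec xstar + b = xstar)
    (x : ℕ → Fin p → ℝ) (hx : ∀ m, x (m + 1) = T.mulVec (x m) + b)
    (cstar : Fin k → ℝ) (hcsum : ∑ i, cstar i = 1)
    (hmin : ∀ c : Fin k → ℝ, ∑ i, c i = 1 →
      eNorm (∑ i : Fin k, cstar i • (x ((i : ℕ) + 1) - x i)) ≤
        eNorm (∑ i : Fin k, c i • (x ((i : ℕ) + 1) - x i))) :
    ∀ P : Polynomial ℝ, P.natDegree ≤ k - 1 → P.eval 1 = 1 →
      eNorm ((T - 1).mulVec ((∑ i : Fin k, cstar i • x i) - xstar)) ≤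
        Real.sqrt (condNum hH.isHermitian) * opNorm (Polynomial.aeval S P) *
          eNorm ((T - 1).mulVec (x 0 - xstar)) :=
  stmt_6_general hk H S hH T hT b xstar hfix x hx cstar hcsum hmin
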